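/- arXiv:1704.04010 — 4 statements merged into one kernel-verified Lean document; each statement's English description precedes it below -/
import Mathlib

section
/- Suppose $U : B \times B \to \mathbb{R}$ is zig-zag concave on a normed space $B$ and satisfies $U(x,y) \geq \|x\|^p - D^p \|y\|^p$ for all $x, y$, and $U(0,0) \leq 0$. Then for any finite sequence $z_1, \ldots, z_n \in B$ and any fixed signs $\varepsilon_1, \ldots, \varepsilon_n \in \{-1,+1\}$, taking expectation over independent uniform random signs $\sigma_1, \ldots, \sigma_n \in \{-1,+1\}$, one has $\mathbb{E}_{\sigma}\, U\big(\sum_{t=1}^n \sigma_t z_t, \sum_{t=1}^n \varepsilon_t \sigma_t z_t\big) \leq U(0,0) \leq 0$, and consequently $\mathbb{E}_{\sigma}\big\|\sum_{t=1}^n \sigma_t z_t\big\|^p \leq D^p\, \mathbb{E}_{\sigma}\big\|\sum_{t=1}^n \varepsilon_t \sigma_t z_t\big\|^p$. -/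
/-!
Peeling off one sign at a time, zig-zag concavity along the direction `(w, ε w)` gives
`U (x + w) (y + ε w) + U (x - w) (y - ε w) ≤ 2 U x y`, so the average of `U` over the random
walk `(∑ σₜ zₜ, ∑ εₜ σₜ zₜ)` started at `(0, 0)` is at most `U 0 0 ≤ 0`. The majorant
`U x y ≥ ‖x‖ᵖ - Dᵖ ‖y‖ᵖ` then turns this into the moment inequality.
-/

open Real

noncomputable def sgn (b : Bool) : ℝ := if b then 1 else -1

@[simp] lemma sgn_true : sgn true = 1 := rfl
@[simp] lemma sgn_false : sgn false = -1 := rfl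

lemma Fintype.sum_fin_succ_pi {α M : Type*} [Fintype α] [AddCommMonoid M] {n : ℕ}
    (f : (Fin (n + 1) → α) → M) :
    ∑ σ, f σ = ∑ a : α, ∑ τ : Fin n → α, f (Fin.cons a τ) := by
  rw [← (Fin.consEquiv fun _ => α).sum_comp, Fintype.sum_prod_type]
  rfl

lemma ConcaveOn.add_neg_le_two_mul {E : Type*} [AddCommGroup E] [Module ℝ E] {g : E → ℝ}
    (hg : ConcaveOn ℝ Set.univ g) (w : E) : g w + g (-w) ≤ 2 * g 0 := by
  have h := hg.2 (Set.mem_univ w) (Set.mem_univ (-w)) (by norm_num : (0:ℝ) ≤ 1/2)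
    (by norm_num : (0:ℝ) ≤ 1/2) (by norm_num)
  rw [smul_neg, add_neg_cancel, smul_eq_mul, smul_eq_mul] at h
  linarith

theorem sum_sgn_le_two_pow_mul_of_midpoint {E : Type*} [AddCommGroup E] [Module ℝ E]
    (U : E → E → ℝ) {n : ℕ} (z : Fin n → E) (ε : Fin n → ℝ)
    (hmid : ∀ t x y w, U (x + w) (y + ε t • w) + U (x - w) (y - ε t • w) ≤ 2 * U x y)
    (x y : E) :
    ∑ σ : Fin n → Bool, U (x + ∑ t, sgn (σ t) • z t) (y + ∑ t, (ε t * sgn (σ t)) • z t)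
      ≤ 2 ^ n * U x y := by
  induction n generalizing x y with
  | zero => simp
  | succ n ih =>
    calc _ = ∑ b : Bool, ∑ τ : Fin n → Bool,
          U (x + sgn b • z 0 + ∑ t, sgn (τ t) • z t.succ)
            (y + (ε 0 * sgn b) • z 0 + ∑ t, (ε t.succ * sgn (τ t)) • z t.succ) := by
          simp only [Fintype.sum_fin_succ_pi, Fin.sum_univ_succ, Fin.cons_zero,
            Fin.cons_succ, add_assoc]
      _ ≤ ∑ b : Bool, 2 ^ n * U (x + sgn b • z 0) (y + (ε 0 * sgn b) • z 0) :=
          Finset.sum_le_sum fun b _ => ih _ _ (fun t => hmid t.succ) _ _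
      _ ≤ 2 ^ (n + 1) * U x y := by
          have hmid₀ := hmid 0 x y (z 0)
          simp only [Fintype.sum_bool, sgn_true, sgn_false, mul_one, one_smul, mul_neg,
            neg_smul, ← sub_eq_add_neg]
          rw [pow_succ]
          rw [← mul_add, mul_assoc]
          exact mul_le_mul_of_nonneg_left hmid₀ (by positivity)

theorem stmt_3_general {B : Type*} [NormedAddCommGroup B] [NormedSpace ℝ B]
    (p D : ℝ) (U : B → B → ℝ)
    (hzz : ∀ (x y : B) (ε : ℝ), (ε = 1 ∨ ε = -1) →
      ConcaveOn ℝ Set.univ (fun z : B => U (x + z) (y + ε • z)))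
    (hmaj : ∀ x y : B, U x y ≥ ‖x‖ ^ p - D ^ p * ‖y‖ ^ p)
    (hzero : U 0 0 ≤ 0)
    (n : ℕ) (z : Fin n → B) (ε : Fin n → ℝ)
    (hε : ∀ t, ε t = 1 ∨ ε t = -1) :
    ((∑ σ : Fin n → Bool,
        U (∑ t, sgn (σ t) • z t) (∑ t, (ε t * sgn (σ t)) • z t)) / 2 ^ n
      ≤ U 0 0 ∧ U 0 0 ≤ 0) ∧
    (∑ σ : Fin n → Bool, ‖∑ t, sgn (σ t) • z t‖ ^ p) / 2 ^ n ≤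
      D ^ p * (∑ σ : Fin n → Bool, ‖∑ t, (ε t * sgn (σ t)) • z t‖ ^ p) / 2 ^ n := by
  have hmid t x y w : U (x + w) (y + ε t • w) + U (x - w) (y - ε t • w) ≤ 2 * U x y := by
    simpa [sub_eq_add_neg] using (hzz x y (ε t) (hε t)).add_neg_le_two_mul w
  have hsum := sum_sgn_le_two_pow_mul_of_midpoint U z ε hmid 0 0
  simp only [zero_add] at hsum
  have h2n : (0 : ℝ) < 2 ^ n := by positivity
  have hmaj_sum := Finset.sum_le_sum (s := Finset.univ) fun (σ : Fin n → Bool) _ =>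
    hmaj (∑ t, sgn (σ t) • z t) (∑ t, (ε t * sgn (σ t)) • z t)
  rw [Finset.sum_sub_distrib, ← Finset.mul_sum] at hmaj_sum
  refine ⟨⟨(div_le_iff₀ h2n).2 (by linarith), hzero⟩, ?_⟩
  rw [← sub_nonpos, ← sub_div]
  apply div_nonpos_of_nonpos_of_nonneg _ h2n.le
  linarith [mul_nonpos_of_nonneg_of_nonpos h2n.le hzero]

/-- If `U` is zig-zag concave on a normed space `B`, satisfies
`U(x,y) ≥ ‖x‖ᵖ - Dᵖ‖y‖ᵖ` and `U(0,0) ≤ 0`, then for any vectors `z₁,…,zₙ` and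
fixed signs `ε₁,…,εₙ`, averaging over uniform random signs `σ`,
`𝔼_σ U(∑ σₜ zₜ, ∑ εₜ σₜ zₜ) ≤ U(0,0) ≤ 0` and consequently
`𝔼_σ ‖∑ σₜ zₜ‖ᵖ ≤ Dᵖ 𝔼_σ ‖∑ εₜ σₜ zₜ‖ᵖ`. -/
theorem stmt_3 {B : Type*} [NormedAddCommGroup B] [NormedSpace ℝ B]
    (p D : ℝ) (hp : 1 < p) (hD : 0 < D) (U : B → B → ℝ)
    (hzz : ∀ (x y : B) (ε : ℝ), (ε = 1 ∨ ε = -1) →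
      ConcaveOn ℝ Set.univ (fun z : B => U (x + z) (y + ε • z)))
    (hmaj : ∀ x y : B, U x y ≥ ‖x‖ ^ p - D ^ p * ‖y‖ ^ p)
    (hzero : U 0 0 ≤ 0)
    (n : ℕ) (z : Fin n → B) (ε : Fin n → ℝ)
    (hε : ∀ t, ε t = 1 ∨ ε t = -1) :
    ((∑ σ : Fin n → Bool,
        U (∑ t, sgn (σ t) • z t) (∑ t, (ε t * sgn (σ t)) • z t)) / 2 ^ n
      ≤ U 0 0 ∧ U 0 0 ≤ 0) ∧
    (∑ σ : Fin n → Bool, ‖∑ t, sgn (σ t) • z t‖ ^ p) / 2 ^ n ≤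
      D ^ p * (∑ σ : Fin n → Bool, ‖∑ t, (ε t * sgn (σ t)) • z t‖ ^ p) / 2 ^ n :=
  stmt_3_general p D U hzz hmaj hzero n z ε hε
end

section
/- Let $y_1, \ldots, y_n$ be fixed vectors in a normed space with $\max_t \|y_t\| \leq M$, and let $\varepsilon_1, \ldots, \varepsilon_n$ be independent Rademacher random variables. Then $\mathbb{E}_\varepsilon \sup_{1 \leq a \leq b \leq n} \big\| \sum_{t=a}^b \varepsilon_t y_t \big\| \leq 4\, \mathbb{E}_\varepsilon \big\| \sum_{t=1}^n \varepsilon_t y_t \big\| + 5 M \log n$. -/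
open Finset Real

/-!
The stronger bound `𝔼 sup_{a ≤ b} ‖∑_{t=a}^b εₜ yₜ‖ ≤ 4 𝔼‖∑_{t=1}^n εₜ yₜ‖` holds.
An interval sum is a difference of two partial sums `S_k = ∑_{t<k} εₜ yₜ`, so the supremum is at
most `2 max_k ‖S_k‖`. Lévy's reflection principle gives `P(max_k ‖S_k‖ > r) ≤ 2 P(‖S_n‖ > r)`:
flipping all signs after the first time `τ` with `‖S_τ‖ > r` is a measure-preserving involution
that fixes `τ` and maps `S_n` to `2 S_τ - S_n`, so one of `S_n`, `2 S_τ - S_n` has norm `> r`.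
Integrating the tail bound over `r` (layer cake) gives `𝔼 max_k ‖S_k‖ ≤ 2 𝔼‖S_n‖`.
-/

open MeasureTheory in
theorem lintegral_ofReal_le_mul_of_meas_lt_le {α : Type*} [MeasurableSpace α] {μ : Measure α}
    {f g : α → ℝ} (c : ENNReal) (hf : 0 ≤ᵐ[μ] f) (hg : 0 ≤ᵐ[μ] g)
    (hf_meas : AEMeasurable f μ) (hg_meas : AEMeasurable g μ)
    (h : ∀ r, μ {ω | r < f ω} ≤ c * μ {ω | r < g ω}) :
    ∫⁻ ω, ENNReal.ofReal (f ω) ∂μ ≤ c * ∫⁻ ω, ENNReal.ofReal (g ω) ∂μ := by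
  have hg_tail : Measurable fun r : ℝ => μ {ω | r < g ω} :=
    Antitone.measurable fun r s hrs => measure_mono fun ω (hω : s < g ω) => hrs.trans_lt hω
  rw [lintegral_eq_lintegral_meas_lt μ hf hf_meas, lintegral_eq_lintegral_meas_lt μ hg hg_meas,
    ← lintegral_const_mul c hg_tail]
  exact setLIntegral_mono (hg_tail.const_mul c) fun r _ => h r

open MeasureTheory in
theorem Finset.sum_le_mul_sum_of_card_lt_le {Ω : Type*} [Fintype Ω] {f g : Ω → ℝ} (c : ℕ)
    (hf : 0 ≤ f) (hg : 0 ≤ g) (h : ∀ r, #{ω | r < f ω} ≤ c * #{ω | r < g ω}) :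
    ∑ ω, f ω ≤ c * ∑ ω, g ω := by
  let : MeasurableSpace Ω := ⊤
  have : MeasurableSingletonClass Ω := ⟨fun _ => trivial⟩
  have count_lt (φ : Ω → ℝ) (r : ℝ) :
      Measure.count {ω | r < φ ω} = (#{ω | r < φ ω} : ENNReal) := by
    rw [Measure.count_apply_finite _ (Set.toFinite _)]
    simp [Set.Finite.toFinset]
  have lintegral_eq (φ : Ω → ℝ) (hφ : 0 ≤ φ) :
      ∫⁻ ω, ENNReal.ofReal (φ ω) ∂Measure.count = ENNReal.ofReal (∑ ω, φ ω) := by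
    rw [lintegral_count, tsum_fintype, ENNReal.ofReal_sum_of_nonneg fun ω _ => hφ ω]
  have key := lintegral_ofReal_le_mul_of_meas_lt_le (μ := Measure.count) c
    (Filter.Eventually.of_forall hf) (Filter.Eventually.of_forall hg)
    (measurable_of_countable f).aemeasurable (measurable_of_countable g).aemeasurable
    fun r => by rw [count_lt, count_lt]; exact_mod_cast h r
  rw [lintegral_eq f hf, lintegral_eq g hg, ← ENNReal.ofReal_natCast,
    ← ENNReal.ofReal_mul c.cast_nonneg] at key
  exact (ENNReal.ofReal_le_ofReal_iff
    (mul_nonneg c.cast_nonneg (sum_nonneg fun ω _ => hg ω))).mp key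

theorem Finset.card_le_two_mul_card_of_injOn {α : Type*} [DecidableEq α] {A B : Finset α}
    (φ : α → α) (hφ : Set.InjOn φ A) (hcover : ∀ a ∈ A, a ∈ B ∨ φ a ∈ B) :
    #A ≤ 2 * #B := by
  have hA : A ⊆ {a ∈ A | a ∈ B} ∪ {a ∈ A | φ a ∈ B} := fun a ha => by
    rcases hcover a ha with h | h <;> simp [ha, h]
  have hB₁ : #{a ∈ A | a ∈ B} ≤ #B := card_le_card fun a ha => (mem_filter.mp ha).2
  have hB₂ : #{a ∈ A | φ a ∈ B} ≤ #B :=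
    card_le_card_of_injOn φ (fun a ha => (mem_filter.mp ha).2)
      (hφ.mono fun a ha => (mem_filter.mp ha).1)
  grw [card_le_card hA, card_union_le]
  omega

theorem sgn_not (b : Bool) : sgn (!b) = -sgn b := by
  cases b <;> simp [sgn]

namespace Rademacher

variable {E : Type*} [NormedAddCommGroup E] [NormedSpace ℝ E] {n : ℕ}
  (y : Fin n → E) (σ : Fin n → Bool)

noncomputable def partialSum (k : ℕ) : E :=
  ∑ t ∈ univ.filter fun t : Fin n => (t : ℕ) < k, sgn (σ t) • y t

def flipFrom (k : ℕ) (σ : Fin n → Bool) : Fin n → Bool :=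
  fun t => if (t : ℕ) < k then σ t else !σ t

noncomputable def maxNormPartialSum : ℝ :=
  (range (n + 1)).sup' nonempty_range_add_one fun k => ‖partialSum y σ k‖

/-- The first `k` with `r < ‖S_k‖`, and `0` if there is none. -/
noncomputable def firstExit (r : ℝ) : ℕ :=
  sInf {k | r < ‖partialSum y σ k‖}

theorem flipFrom_flipFrom (k : ℕ) : flipFrom k (flipFrom k σ) = σ := by
  funext t
  by_cases h : (t : ℕ) < k <;> simp [flipFrom, h]

theorem partialSum_flipFrom_of_le {j k : ℕ} (hjk : j ≤ k) :
    partialSum y (flipFrom k σ) j = partialSum y σ j := by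
  refine sum_congr rfl fun t ht => ?_
  simp [flipFrom, (mem_filter.mp ht).2.trans_le hjk]

theorem partialSum_of_le {k : ℕ} (hk : n ≤ k) : partialSum y σ k = ∑ t, sgn (σ t) • y t :=
  sum_congr (filter_true_of_mem fun t _ => t.isLt.trans_le hk) fun _ _ => rfl

theorem partialSum_add_partialSum_flipFrom (k : ℕ) :
    partialSum y σ n + partialSum y (flipFrom k σ) n = (2 : ℝ) • partialSum y σ k := by
  have split (τ : Fin n → Bool) : partialSum y τ n =
      partialSum y τ k + ∑ t ∈ univ.filter fun t : Fin n => ¬(t : ℕ) < k, sgn (τ t) • y t := by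
    rw [partialSum_of_le y τ le_rfl, partialSum, sum_filter_add_sum_filter_not]
  have tail_flip : ∑ t ∈ univ.filter fun t : Fin n => ¬(t : ℕ) < k, sgn (flipFrom k σ t) • y t =
      -∑ t ∈ univ.filter fun t : Fin n => ¬(t : ℕ) < k, sgn (σ t) • y t := by
    rw [← sum_neg_distrib]
    refine sum_congr rfl fun t ht => ?_
    simp [flipFrom, (mem_filter.mp ht).2, sgn_not]
  rw [split σ, split (flipFrom k σ), partialSum_flipFrom_of_le y σ le_rfl, tail_flip, two_smul]
  abel

theorem norm_partialSum_le_maxNormPartialSum {k : ℕ} (hk : k ≤ n) :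
    ‖partialSum y σ k‖ ≤ maxNormPartialSum y σ :=
  le_sup' (fun k => ‖partialSum y σ k‖) (mem_range_succ_iff.mpr hk)

theorem maxNormPartialSum_nonneg : 0 ≤ maxNormPartialSum y σ :=
  (norm_nonneg _).trans (norm_partialSum_le_maxNormPartialSum y σ n.zero_le)

theorem lt_maxNormPartialSum_iff {r : ℝ} :
    r < maxNormPartialSum y σ ↔ ∃ k ≤ n, r < ‖partialSum y σ k‖ := by
  simp [maxNormPartialSum, lt_sup'_iff]

theorem lt_norm_partialSum_firstExit {r : ℝ} {k : ℕ} (hk : r < ‖partialSum y σ k‖) :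
    r < ‖partialSum y σ (firstExit y σ r)‖ :=
  Nat.sInf_mem (s := {k | r < ‖partialSum y σ k‖}) ⟨k, hk⟩

/-- `firstExit` is a stopping time: flipping the signs after it does not move it. -/
theorem firstExit_flipFrom_firstExit {r : ℝ} {k : ℕ} (hk : r < ‖partialSum y σ k‖) :
    firstExit y (flipFrom (firstExit y σ r) σ) r = firstExit y σ r := by
  set τ := firstExit y σ r
  have prefix_eq {j : ℕ} (hj : j ≤ τ) := partialSum_flipFrom_of_le y σ hj
  have hτ : r < ‖partialSum y (flipFrom τ σ) τ‖ := by
    rw [prefix_eq le_rfl]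
    exact lt_norm_partialSum_firstExit y σ hk
  refine le_antisymm (Nat.sInf_le hτ) (not_lt.mp fun hlt => ?_)
  have hmem := lt_norm_partialSum_firstExit y (flipFrom τ σ) hτ
  rw [prefix_eq hlt.le] at hmem
  exact Nat.notMem_of_lt_sInf hlt hmem

/-- Lévy's reflection principle. -/
theorem card_lt_maxNormPartialSum_le (r : ℝ) :
    #{σ | r < maxNormPartialSum y σ} ≤ 2 * #{σ | r < ‖partialSum y σ n‖} := by
  classical
  refine card_le_two_mul_card_of_injOn (fun σ => flipFrom (firstExit y σ r) σ) ?_ ?_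
  · intro σ₁ hσ₁ σ₂ hσ₂ heq
    obtain ⟨k₁, -, hk₁⟩ := (lt_maxNormPartialSum_iff y σ₁).mp (mem_filter.mp hσ₁).2
    obtain ⟨k₂, -, hk₂⟩ := (lt_maxNormPartialSum_iff y σ₂).mp (mem_filter.mp hσ₂).2
    have hτ : firstExit y σ₁ r = firstExit y σ₂ r := by
      rw [← firstExit_flipFrom_firstExit y σ₁ hk₁, ← firstExit_flipFrom_firstExit y σ₂ hk₂]
      exact congrArg (firstExit y · r) heq
    simp only at heq
    rw [← flipFrom_flipFrom σ₁ (firstExit y σ₁ r), heq, hτ, flipFrom_flipFrom]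
  · intro σ hσ
    obtain ⟨k, -, hk⟩ := (lt_maxNormPartialSum_iff y σ).mp (mem_filter.mp hσ).2
    have hτ := lt_norm_partialSum_firstExit y σ hk
    have hsum := norm_add_le (partialSum y σ n)
      (partialSum y (flipFrom (firstExit y σ r) σ) n)
    rw [partialSum_add_partialSum_flipFrom, norm_smul, Real.norm_two] at hsum
    by_contra! hc
    simp only [mem_filter, mem_univ, true_and, not_lt] at hc
    linarith [hc.1, hc.2]

theorem sum_maxNormPartialSum_le :
    ∑ σ, maxNormPartialSum y σ ≤ 2 * ∑ σ : Fin n → Bool, ‖∑ t, sgn (σ t) • y t‖ := by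
  simp_rw [← partialSum_of_le y _ le_rfl]
  exact_mod_cast sum_le_mul_sum_of_card_lt_le 2 (maxNormPartialSum_nonneg y)
    (fun σ => norm_nonneg _) (card_lt_maxNormPartialSum_le y)

theorem sum_Icc_eq_sub (a b : Fin n) (hab : a ≤ b) :
    ∑ t ∈ Icc a b, sgn (σ t) • y t = partialSum y σ (b + 1) - partialSum y σ a := by
  have hsub : univ.filter (fun t : Fin n => (t : ℕ) < a) ⊆
      univ.filter fun t : Fin n => (t : ℕ) < b + 1 := by
    intro t
    simp only [mem_filter, mem_univ, true_and]
    have : (a : ℕ) ≤ b := hab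
    omega
  rw [partialSum, partialSum, ← sum_sdiff_eq_sub hsub]
  congr 1
  ext t
  simp only [mem_Icc, mem_sdiff, mem_filter, mem_univ, true_and, Fin.le_def]
  omega

theorem iSup_norm_sum_Icc_le :
    ⨆ a : Fin n, ⨆ b : Fin n, ‖∑ t ∈ Icc a b, sgn (σ t) • y t‖ ≤ 2 * maxNormPartialSum y σ := by
  have hmax := maxNormPartialSum_nonneg y σ
  refine Real.iSup_le (fun a => Real.iSup_le (fun b => ?_) (by positivity)) (by positivity)
  rcases le_or_gt a b with hab | hab
  · rw [sum_Icc_eq_sub y σ a b hab, two_mul]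
    exact (norm_sub_le _ _).trans (add_le_add
      (norm_partialSum_le_maxNormPartialSum y σ b.isLt)
      (norm_partialSum_le_maxNormPartialSum y σ a.isLt.le))
  · rw [Icc_eq_empty_of_lt hab, sum_empty, norm_zero]
    positivity

end Rademacher

open Rademacher in
theorem stmt_7_general {E : Type*} [NormedAddCommGroup E] [NormedSpace ℝ E]
    (n : ℕ) (y : Fin n → E) (M : ℝ)
    (hM : ∀ t, ‖y t‖ ≤ M) :
    (∑ σ : Fin n → Bool,
        ⨆ a : Fin n, ⨆ b : Fin n, ‖∑ t ∈ Finset.Icc a b, sgn (σ t) • y t‖)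
        / 2 ^ n ≤
      4 * ((∑ σ : Fin n → Bool, ‖∑ t, sgn (σ t) • y t‖) / 2 ^ n)
        + 5 * M * Real.log n := by
  have hlog : 0 ≤ 5 * M * Real.log n := by
    rcases n with _ | n
    · simp
    · have hM₀ : 0 ≤ M := (norm_nonneg _).trans (hM 0)
      have : 0 ≤ Real.log (n + 1 : ℕ) := Real.log_nonneg (by simp)
      positivity
  have hsum : (∑ σ : Fin n → Bool,
      ⨆ a : Fin n, ⨆ b : Fin n, ‖∑ t ∈ Icc a b, sgn (σ t) • y t‖)
        ≤ 4 * ∑ σ : Fin n → Bool, ‖∑ t, sgn (σ t) • y t‖ :=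
    calc _ ≤ ∑ σ, 2 * maxNormPartialSum y σ := sum_le_sum fun σ _ => iSup_norm_sum_Icc_le y σ
      _ ≤ 2 * (2 * ∑ σ : Fin n → Bool, ‖∑ t, sgn (σ t) • y t‖) := by
        rw [← mul_sum]; gcongr; exact sum_maxNormPartialSum_le y
      _ = _ := by ring
  calc _ ≤ (4 * ∑ σ : Fin n → Bool, ‖∑ t, sgn (σ t) • y t‖) / 2 ^ n := by gcongr
    _ = 4 * ((∑ σ : Fin n → Bool, ‖∑ t, sgn (σ t) • y t‖) / 2 ^ n) := by ring
    _ ≤ _ := le_add_of_nonneg_right hlog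

/-- For fixed vectors `y₁,…,yₙ` in a normed space with `max_t ‖y_t‖ ≤ M`, and
independent Rademacher signs `ε`,
`𝔼 sup_{a ≤ b} ‖∑_{t=a}^b εₜ yₜ‖ ≤ 4 𝔼‖∑_{t=1}^n εₜ yₜ‖ + 5 M log n`. -/
theorem stmt_7 {E : Type*} [NormedAddCommGroup E] [NormedSpace ℝ E]
    (n : ℕ) (hn : 1 ≤ n) (y : Fin n → E) (M : ℝ)
    (hM : ∀ t, ‖y t‖ ≤ M) :
    (∑ σ : Fin n → Bool,
        ⨆ a : Fin n, ⨆ b : Fin n, ‖∑ t ∈ Finset.Icc a b, sgn (σ t) • y t‖)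
        / 2 ^ n ≤
      4 * ((∑ σ : Fin n → Bool, ‖∑ t, sgn (σ t) • y t‖) / 2 ^ n)
        + 5 * M * Real.log n :=
  stmt_7_general n y M hM
end

section
/- Let $k \geq 4$ be an even integer and define $\tilde{U}(x,y) = x^k - C x^{k-2} y^2 - B y^k$ with $C = 2\binom{k}{2}$ and $B = \frac{1}{k-2}\big(2C\binom{k-2}{2}\big)^{k-2}\binom{k}{2}^{-1}$. Then $\tilde{U}$ is zig-zag concave on $\mathbb{R}\times\mathbb{R}$: for every $x, y \in \mathbb{R}$, $\varepsilon \in \{-1,+1\}$, and $h \in \mathbb{R}$, the function $G(t) = \tilde{U}(x + ht, y + \varepsilon h t)$ satisfies $G''(0) \leq 0$ (and $G$ is concave). -/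
/-!
Write `k = m + 4`, `X = x + h t`, `Y = y + ε h t`. Since `ε² = 1`, the second derivative of the
zig-zag restriction is `h²` times
`k(k-1) X^{k-2} - C ((k-2)(k-3) X^{k-4} Y² + 4ε(k-2) X^{k-3} Y + 2 X^{k-2}) - B k(k-1) Y^{k-2}`.
As `k` is even the `X^{k-4} Y²` term has a sign, and `C ≥ k(k-1)` leaves `-C X^{k-2}` to spare.
Young's inequality with exponents `k-2` and `(k-2)/(k-3)` bounds the mixed term by
`C X^{k-2} + C (4(k-2))^{k-2}/(k-2) · Y^{k-2}`, and the choice of `B` pays for the second part.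
-/

open Set

theorem young_inequality_of_nonneg_pow (n : ℕ) {u v : ℝ} (hu : 0 ≤ u) (hv : 0 ≤ v) :
    u * v ^ n ≤ u ^ (n + 1) / (n + 1) + n / (n + 1) * v ^ (n + 1) := by
  have hu' : (u ^ (n + 1)) ^ (1 / ((n : ℝ) + 1)) = u := by
    rw [one_div]; exact_mod_cast Real.pow_rpow_inv_natCast hu n.succ_ne_zero
  have hv' : (v ^ (n + 1)) ^ ((n : ℝ) / (n + 1)) = v ^ n := by
    rw [div_eq_inv_mul, Real.rpow_mul (by positivity), Real.rpow_natCast]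
    congr 1
    exact_mod_cast Real.pow_rpow_inv_natCast hv n.succ_ne_zero
  have := Real.geom_mean_le_arith_mean2_weighted (p₁ := u ^ (n + 1)) (p₂ := v ^ (n + 1))
    (by positivity : (0 : ℝ) ≤ 1 / (n + 1)) (by positivity : (0 : ℝ) ≤ n / (n + 1))
    (by positivity) (by positivity) (by field_simp; ring)
  rwa [hu', hv', one_div_mul_eq_div] at this

theorem mul_four_mul_pow_le_two_mul_pow (m : ℕ) {C : ℝ} (hC : 8 ≤ C) :
    C * (4 * (m + 2)) ^ (m + 2) ≤ 2 * (C * ((m + 2) * (m + 1))) ^ (m + 2) := by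
  have hm : (0 : ℝ) ≤ m := m.cast_nonneg
  have hab : 4 * ((m : ℝ) + 2) ≤ C * ((m + 2) * (m + 1)) := by
    nlinarith [mul_le_mul_of_nonneg_left (by nlinarith : 4 ≤ C * (m + 1))
      (by positivity : (0 : ℝ) ≤ m + 2)]
  have hab2 : C * (4 * ((m : ℝ) + 2)) ^ 2 ≤ 2 * (C * ((m + 2) * (m + 1))) ^ 2 := by
    have : 0 ≤ 2 * C * ((m : ℝ) + 2) ^ 2 * (C * (m + 1) ^ 2 - 8) :=
      mul_nonneg (by positivity) (by nlinarith)
    nlinarith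
  set a : ℝ := 4 * (m + 2)
  set b : ℝ := C * ((m + 2) * (m + 1))
  calc C * a ^ (m + 2) = C * a ^ 2 * a ^ m := by ring
    _ ≤ 2 * b ^ 2 * b ^ m := by gcongr
    _ = 2 * b ^ (m + 2) := by ring

theorem deriv_deriv_eq_of_hasDerivAt {f f' f'' : ℝ → ℝ} (hf : ∀ t, HasDerivAt f (f' t) t)
    (hf' : ∀ t, HasDerivAt f' (f'' t) t) : deriv (deriv f) = f'' := by
  rw [funext fun t => (hf t).deriv]
  exact funext fun t => (hf' t).deriv

/-- The function `Ũ` of the paper with `k = m + 4` and free coefficients `C`, `B`. -/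
def zigzagU (m : ℕ) (C B x y : ℝ) : ℝ := x ^ (m + 4) - C * x ^ (m + 2) * y ^ 2 - B * y ^ (m + 4)

theorem exists_hasDerivAt_zigzagU_line (m : ℕ) (C B x y h e : ℝ) :
    ∃ G' : ℝ → ℝ, (∀ t, HasDerivAt (fun s => zigzagU m C B (x + h * s) (y + e * s)) (G' t) t) ∧
      ∀ t, HasDerivAt G'
        ((m + 4) * (m + 3) * h ^ 2 * (x + h * t) ^ (m + 2)
          - C * ((m + 2) * (m + 1) * h ^ 2 * ((x + h * t) ^ m * (y + e * t) ^ 2)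
            + 4 * (m + 2) * h * e * ((x + h * t) ^ (m + 1) * (y + e * t))
            + 2 * e ^ 2 * (x + h * t) ^ (m + 2))
          - (m + 4) * (m + 3) * B * e ^ 2 * (y + e * t) ^ (m + 2)) t := by
  have hX (t : ℝ) : HasDerivAt (fun s => x + h * s) h t := by
    simpa using ((hasDerivAt_id t).const_mul h).const_add x
  have hY (t : ℝ) : HasDerivAt (fun s => y + e * s) e t := by
    simpa using ((hasDerivAt_id t).const_mul e).const_add y
  refine ⟨fun t => (m + 4) * h * (x + h * t) ^ (m + 3)
      - C * ((m + 2) * h * ((x + h * t) ^ (m + 1) * (y + e * t) ^ 2)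
        + 2 * e * ((x + h * t) ^ (m + 2) * (y + e * t)))
      - (m + 4) * B * e * (y + e * t) ^ (m + 3), fun t => ?_, fun t => ?_⟩
  · have h1 := (hX t).fun_pow (m + 4)
    have h2 := (((hX t).fun_pow (m + 2)).const_mul C).fun_mul ((hY t).fun_pow 2)
    have h3 := ((hY t).fun_pow (m + 4)).const_mul B
    refine ((h1.fun_sub h2).fun_sub h3).congr_deriv ?_
    push_cast
    ring
  · have h1 := ((hX t).fun_pow (m + 3)).const_mul ((m + 4) * h)
    have h2 := (((hX t).fun_pow (m + 1)).fun_mul ((hY t).fun_pow 2)).const_mul ((m + 2) * h)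
    have h3 := (((hX t).fun_pow (m + 2)).fun_mul (hY t)).const_mul (2 * e)
    have h4 := ((hY t).fun_pow (m + 3)).const_mul ((m + 4) * B * e)
    refine ((h1.fun_sub ((h2.fun_add h3).const_mul C)).fun_sub h4).congr_deriv ?_
    push_cast
    ring

/-- The left-hand side is the second derivative of `Ũ` at `(X, Y)` in the direction `(1, ε)`,
with `ε²` replaced by `1`. -/
theorem zigzagU_second_deriv_nonpos (m : ℕ) (hm : Even m) {C B ε : ℝ}
    (hC : (m + 4) * (m + 3) ≤ C)
    (hB : C * (4 * (m + 2)) ^ (m + 2) / (m + 2) ≤ (m + 4) * (m + 3) * B) (hε : |ε| ≤ 1)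
    (X Y : ℝ) :
    (m + 4) * (m + 3) * X ^ (m + 2)
      - C * ((m + 2) * (m + 1) * (X ^ m * Y ^ 2) + 4 * (m + 2) * ε * (X ^ (m + 1) * Y)
        + 2 * X ^ (m + 2))
      - (m + 4) * (m + 3) * B * Y ^ (m + 2) ≤ 0 := by
  have hC0 : 0 ≤ C := le_trans (by positivity) hC
  have hm2 : Even (m + 2) := hm.add even_two
  have hmixed : 0 ≤ X ^ m * Y ^ 2 := mul_nonneg (hm.pow_nonneg X) (sq_nonneg Y)
  have hcross : -(ε * (X ^ (m + 1) * Y)) ≤ |X| ^ (m + 1) * |Y| := by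
    calc -(ε * (X ^ (m + 1) * Y)) ≤ |ε * (X ^ (m + 1) * Y)| := neg_le_abs _
      _ ≤ |X| ^ (m + 1) * |Y| := by
        rw [abs_mul, abs_mul, abs_pow]
        exact mul_le_of_le_one_left (by positivity) hε
  have hyoung : 4 * (m + 2) * |Y| * |X| ^ (m + 1)
      ≤ (4 * (m + 2)) ^ (m + 2) / (m + 2) * Y ^ (m + 2) + X ^ (m + 2) := by
    have h := young_inequality_of_nonneg_pow (m + 1) (u := 4 * (m + 2) * |Y|) (by positivity)
      (abs_nonneg X)
    rw [mul_pow, hm2.pow_abs, hm2.pow_abs] at h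
    have : ((m + 1 : ℕ) : ℝ) / ((m + 1 : ℕ) + 1) * X ^ (m + 2) ≤ X ^ (m + 2) :=
      mul_le_of_le_one_left (hm2.pow_nonneg X) (by rw [div_le_one (by positivity)]; linarith)
    push_cast at h this
    linear_combination h + this
  linear_combination mul_le_mul_of_nonneg_right hC (hm2.pow_nonneg X)
    + mul_nonneg (by positivity : 0 ≤ C * (m + 2) * (m + 1)) hmixed
    + mul_le_mul_of_nonneg_left hcross (by positivity : 0 ≤ 4 * C * (m + 2))
    + mul_le_mul_of_nonneg_left hyoung hC0
    + mul_le_mul_of_nonneg_right hB (hm2.pow_nonneg Y)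

theorem zigzagU_line_deriv2_nonpos_and_concaveOn (m : ℕ) (hm : Even m) {C B ε : ℝ}
    (hC : (m + 4) * (m + 3) ≤ C)
    (hB : C * (4 * (m + 2)) ^ (m + 2) / (m + 2) ≤ (m + 4) * (m + 3) * B) (hε : |ε| = 1)
    (x y h : ℝ) :
    (∀ t, deriv (deriv fun t => zigzagU m C B (x + h * t) (y + ε * h * t)) t ≤ 0) ∧
      ConcaveOn ℝ univ fun t => zigzagU m C B (x + h * t) (y + ε * h * t) := by
  obtain ⟨G', hG, hG'⟩ := exists_hasDerivAt_zigzagU_line m C B x y h (ε * h)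
  have hε2 : ε ^ 2 = 1 := by rw [← sq_abs, hε, one_pow]
  have hG'' : ∀ t, deriv (deriv fun t => zigzagU m C B (x + h * t) (y + ε * h * t)) t ≤ 0 := by
    intro t
    rw [deriv_deriv_eq_of_hasDerivAt hG hG']
    have := mul_le_mul_of_nonneg_left
      (zigzagU_second_deriv_nonpos m hm hC hB hε.le (x + h * t) (y + ε * h * t)) (sq_nonneg h)
    linear_combination this - h ^ 2 * (2 * C * (x + h * t) ^ (m + 2)
      + (m + 4) * (m + 3) * B * (y + ε * h * t) ^ (m + 2)) * hε2
  refine ⟨hG'', concaveOn_univ_of_deriv2_nonpos (fun t => (hG t).differentiableAt) ?_ hG''⟩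
  rw [funext fun t => (hG t).deriv]
  exact fun t => (hG' t).differentiableAt

/-- For even `k ≥ 4`, with `C = 2·C(k,2)` and
`B = (2C·C(k-2,2))^{k-2} / ((k-2)·C(k,2))`, the function
`Ũ(x,y) = x^k - C x^{k-2} y² - B y^k` is zig-zag concave: along any zig-zag
line `G(t) = Ũ(x+ht, y+εht)` one has `G''(0) ≤ 0`, and `G` is concave. -/
theorem stmt_9 (k : ℕ) (hk : 4 ≤ k) (hke : Even k) :
    ∀ x y ε h : ℝ, (ε = 1 ∨ ε = -1) →
      (deriv (deriv (fun t : ℝ =>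
          (x + h * t) ^ k
            - (2 * (Nat.choose k 2 : ℝ)) * (x + h * t) ^ (k - 2)
                * (y + ε * h * t) ^ 2
            - ((1 / ((k : ℝ) - 2))
                * (2 * (2 * (Nat.choose k 2 : ℝ)) * (Nat.choose (k - 2) 2 : ℝ))
                  ^ (k - 2) * ((Nat.choose k 2 : ℝ))⁻¹)
                * (y + ε * h * t) ^ k)) 0 ≤ 0) ∧
      ConcaveOn ℝ Set.univ (fun t : ℝ =>
          (x + h * t) ^ k
            - (2 * (Nat.choose k 2 : ℝ)) * (x + h * t) ^ (k - 2)
                * (y + ε * h * t) ^ 2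
            - ((1 / ((k : ℝ) - 2))
                * (2 * (2 * (Nat.choose k 2 : ℝ)) * (Nat.choose (k - 2) 2 : ℝ))
                  ^ (k - 2) * ((Nat.choose k 2 : ℝ))⁻¹)
                * (y + ε * h * t) ^ k) := by
  obtain ⟨m, rfl⟩ : ∃ m, k = m + 4 := ⟨k - 4, by omega⟩
  have hm : Even m := (Nat.even_add.mp hke).mpr (by decide)
  intro x y ε h hε
  have hε' : |ε| = 1 := by rcases hε with rfl | rfl <;> norm_num
  have hC : 2 * ((m + 4).choose 2 : ℝ) = (m + 4) * (m + 3) := by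
    rw [Nat.cast_choose_two]; push_cast; ring
  refine ⟨(zigzagU_line_deriv2_nonpos_and_concaveOn m hm hC.ge ?hB hε' x y h).1 0,
    (zigzagU_line_deriv2_nonpos_and_concaveOn m hm hC.ge ?hB hε' x y h).2⟩
  rw [show m + 4 - 2 = m + 2 from rfl, hC, Nat.cast_choose_two, Nat.cast_choose_two]
  push_cast
  calc _ ≤ 2 * ((m + 4) * (m + 3) * ((m + 2) * (m + 1) : ℝ)) ^ (m + 2) / (m + 2) :=
        div_le_div_of_nonneg_right (mul_four_mul_pow_le_two_mul_pow m (by nlinarith))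
          (by positivity)
    _ = _ := by
        rw [show (m : ℝ) + 4 - 2 = m + 2 by ring, show (m : ℝ) + 2 - 1 = m + 1 by ring,
          show (m : ℝ) + 4 - 1 = m + 3 by ring]
        field_simp
end

section
/- Let $u : B \times B \to \mathbb{R}$ be biconvex on a normed space $B$, with $u(x,y) \leq \|x+y\|$ whenever $\max\{\|x\|, \|y\|\} \geq 1$, $u(x,y) = u(-x,-y)$, and $u(x,y) \leq u(0,0) + \|x+y\|$ for all $x,y$, with $u(0,0) > 0$. Then the function $\mathbf{U}(x,y) = 1 - \frac{u(x+y,\, y-x)}{u(0,0)}$ is zig-zag concave, satisfies $\mathbf{U}(0,0) = 0$, and satisfies the weak-type minorization $\mathbf{U}(x,y) \geq \mathbf{1}\{\|x\| \geq 1\} - \frac{2}{u(0,0)}\|y\|$ for all $x, y \in B$. -/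
/-!
In the rotated coordinates `(x + y, y - x)` the two zig-zag directions `z ↦ (z, ε z)` become the
coordinate directions, so biconvexity of `u` is exactly zig-zag concavity of `𝐔`. For the
minorization, `(x + y) + (y - x) = 2y`: if `‖x‖ ≥ 1` then one of `‖x + y‖, ‖y - x‖` is at least `1`
and the majorization gives `u(x + y, y - x) ≤ 2‖y‖`; otherwise the upper bound gives
`u(x + y, y - x) ≤ u(0,0) + 2‖y‖`.
-/

open Set

theorem ConvexOn.comp_const_add_smul {𝕜 E β : Type*} [CommSemiring 𝕜] [PartialOrder 𝕜]
    [AddCommMonoid E] [Module 𝕜 E] [AddCommMonoid β] [PartialOrder β] [SMul 𝕜 β]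
    {f : E → β} (hf : ConvexOn 𝕜 univ f) (a : E) (c : 𝕜) :
    ConvexOn 𝕜 univ (fun z => f (a + c • z)) := by
  have h := (hf.translate_right a).comp_linearMap (c • LinearMap.id)
  simp only [preimage_univ, Function.comp_def, LinearMap.smul_apply, LinearMap.id_apply] at h
  exact h

theorem ConvexOn.concaveOn_one_sub_div {E : Type*} [AddCommMonoid E] [Module ℝ E]
    {s : Set E} {f : E → ℝ} (hf : ConvexOn ℝ s f) {c : ℝ} (hc : 0 ≤ c) :
    ConcaveOn ℝ s (fun z => 1 - f z / c) := by
  have h := (concaveOn_const 1 hf.1).sub (hf.smul (inv_nonneg.2 hc))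
  simp only [smul_eq_mul, ← div_eq_inv_mul] at h
  exact h

section

variable {B : Type*} [NormedAddCommGroup B] [NormedSpace ℝ B]

theorem concaveOn_one_sub_div_rotated {u : B → B → ℝ}
    (hbi₁ : ∀ y, ConvexOn ℝ univ (fun x => u x y)) (hbi₂ : ∀ x, ConvexOn ℝ univ (fun y => u x y))
    {c : ℝ} (hc : 0 ≤ c) (x y : B) {ε : ℝ} (hε : ε = 1 ∨ ε = -1) :
    ConcaveOn ℝ univ (fun z : B => 1 - u ((x + z) + (y + ε • z)) ((y + ε • z) - (x + z)) / c) := by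
  rcases hε with rfl | rfl
  · convert ((hbi₁ (y - x)).comp_const_add_smul (x + y) 2).concaveOn_one_sub_div hc using 4 with z
    congr 1 <;> module
  · convert ((hbi₂ (x + y)).comp_const_add_smul (y - x) (-2)).concaveOn_one_sub_div hc using 4 with z
    congr 1 <;> module

theorem one_le_max_norm_add_norm_sub {x : B} (hx : 1 ≤ ‖x‖) (y : B) :
    1 ≤ max ‖x + y‖ ‖y - x‖ := by
  have h : ‖(2 : ℝ) • x‖ ≤ ‖x + y‖ + ‖y - x‖ := by
    calc ‖(2 : ℝ) • x‖ = ‖(x + y) - (y - x)‖ := by congr 1; module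
      _ ≤ ‖x + y‖ + ‖y - x‖ := norm_sub_le _ _
  rw [norm_smul, Real.norm_two] at h
  linarith [le_max_left ‖x + y‖ ‖y - x‖, le_max_right ‖x + y‖ ‖y - x‖]

theorem rotated_le_of_majorized {u : B → B → ℝ}
    (hmaj : ∀ x y : B, 1 ≤ max ‖x‖ ‖y‖ → u x y ≤ ‖x + y‖)
    (hup : ∀ x y : B, u x y ≤ u 0 0 + ‖x + y‖) (x y : B) :
    u (x + y) (y - x) ≤ (if 1 ≤ ‖x‖ then 0 else u 0 0) + 2 * ‖y‖ := by
  have h2y : ‖(x + y) + (y - x)‖ = 2 * ‖y‖ := by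
    rw [show (x + y) + (y - x) = (2 : ℝ) • y by module, norm_smul, Real.norm_two]
  split_ifs with hx
  · simpa [h2y] using hmaj _ _ (one_le_max_norm_add_norm_sub hx y)
  · simpa [h2y] using hup (x + y) (y - x)

end

theorem stmt_12_general {B : Type*} [NormedAddCommGroup B] [NormedSpace ℝ B]
    (u : B → B → ℝ)
    (hbi₁ : ∀ y, ConvexOn ℝ Set.univ (fun x => u x y))
    (hbi₂ : ∀ x, ConvexOn ℝ Set.univ (fun y => u x y))
    (hmaj : ∀ x y : B, 1 ≤ max ‖x‖ ‖y‖ → u x y ≤ ‖x + y‖)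
    (hup : ∀ x y : B, u x y ≤ u 0 0 + ‖x + y‖)
    (hpos : 0 < u 0 0) :
    (∀ (x y : B) (ε : ℝ), (ε = 1 ∨ ε = -1) →
      ConcaveOn ℝ Set.univ (fun z : B =>
        1 - u ((x + z) + (y + ε • z)) ((y + ε • z) - (x + z)) / u 0 0)) ∧
    (1 - u ((0 : B) + 0) ((0 : B) - 0) / u 0 0 = 0) ∧
    (∀ x y : B,
      1 - u (x + y) (y - x) / u 0 0 ≥
        (if 1 ≤ ‖x‖ then (1 : ℝ) else 0) - (2 / u 0 0) * ‖y‖) := by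
  refine ⟨fun x y ε hε => concaveOn_one_sub_div_rotated hbi₁ hbi₂ hpos.le x y hε, ?_, ?_⟩
  · simp [hpos.ne']
  · intro x y
    have hle := div_le_div_of_nonneg_right (rotated_le_of_majorized hmaj hup x y) hpos.le
    rw [add_div, mul_div_right_comm] at hle
    split_ifs at hle ⊢ <;> simp only [zero_div, div_self hpos.ne'] at hle <;> linarith

/-- Burkholder's construction of a weak-type zig-zag concave function from a
biconvex `ζ`-type function `u`: if `u` is biconvex, `u(x,y) ≤ ‖x+y‖` whenever
`max(‖x‖,‖y‖) ≥ 1`, `u(x,y) = u(-x,-y)`, `u(x,y) ≤ u(0,0) + ‖x+y‖`, and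
`u(0,0) > 0`, then `𝐔(x,y) = 1 - u(x+y, y-x)/u(0,0)` is zig-zag concave,
vanishes at the origin, and satisfies
`𝐔(x,y) ≥ 1{‖x‖ ≥ 1} - (2/u(0,0))‖y‖`. -/
theorem stmt_12 {B : Type*} [NormedAddCommGroup B] [NormedSpace ℝ B]
    (u : B → B → ℝ)
    (hbi₁ : ∀ y, ConvexOn ℝ Set.univ (fun x => u x y))
    (hbi₂ : ∀ x, ConvexOn ℝ Set.univ (fun y => u x y))
    (hmaj : ∀ x y : B, 1 ≤ max ‖x‖ ‖y‖ → u x y ≤ ‖x + y‖)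
    (hsymm : ∀ x y : B, u x y = u (-x) (-y))
    (hup : ∀ x y : B, u x y ≤ u 0 0 + ‖x + y‖)
    (hpos : 0 < u 0 0) :
    (∀ (x y : B) (ε : ℝ), (ε = 1 ∨ ε = -1) →
      ConcaveOn ℝ Set.univ (fun z : B =>
        1 - u ((x + z) + (y + ε • z)) ((y + ε • z) - (x + z)) / u 0 0)) ∧
    (1 - u ((0 : B) + 0) ((0 : B) - 0) / u 0 0 = 0) ∧
    (∀ x y : B,
      1 - u (x + y) (y - x) / u 0 0 ≥
        (if 1 ≤ ‖x‖ then (1 : ℝ) else 0) - (2 / u 0 0) * ‖y‖) :=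
  stmt_12_general u hbi₁ hbi₂ hmaj hup hpos
end
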